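/- (Theorem 1 — distance magnifying.) Fix an anchor a ∈ I and two contrast elements l, l' ∈ J \ {a} with ρ(l) ≠ ρ(a), ρ(l') ≠ ρ(a), and |ρ(a) − ρ(l)| > |ρ(a) − ρ(l')|. For t ∈ {0,1} let ∇₁(t) and ∇₂(t) denote the partial derivatives of L_t with respect to the logits s_{a,l} and s_{a,l'} respectively. Then for each t ∈ {0,1} both ∇₁(t) > 0 and ∇₂(t) > 0, the ratio satisfies ∇₁(t)/∇₂(t) = ((1 + t·|ρ(a) − ρ(l)|)/(1 + t·|ρ(a) − ρ(l')|)) · exp((s_{a,l} − s_{a,l'})/τ), and consequently ∇₁(1)/∇₂(1) > ∇₁(0)/∇₂(0); that is, the weighted loss magnifies the gradient ratio of the farther negative pair relative to the nearer one compared with the unweighted loss. -/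

import Mathlib

/-! Only the anchor-`a` summand of the loss depends on `s (a, b)`, and for a negative `b` it
enters only through the log-partition function, so `∂L_t/∂s(a,b)` equals
`(#P_a / k_a) · w_t(ρ a, ρ b) e^{s(a,b)/τ} / (τ · ∑_{j ≠ a} w_t(ρ a, ρ j) e^{s(a,j)/τ})`.
Everything but `w_t(ρ a, ρ b) e^{s(a,b)/τ}` cancels in the ratio of two such derivatives, and
the ratio of weights is `1` at `t = 0` and exceeds `1` at `t = 1` because `ρ l` is farther
from `ρ a`. -/

open Real Finset Function

section AnchorLoss

variable {ι κ : Type*} [DecidableEq ι] [DecidableEq κ]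

/-- For anchor `a`: `v = w_t(ρ a, ρ ·)`, `T = J \ {a}`, `P = P_a` and `x = s (a, ·)`. -/
noncomputable def anchorLoss (τ : ℝ) (v : κ → ℝ) (T P : Finset κ) (x : κ → ℝ) : ℝ :=
  ∑ j ∈ P, (log (∑ l ∈ T, v l * exp (x l / τ)) - x j / τ)

lemma sum_mul_exp_update {T : Finset κ} (τ : ℝ) (v x : κ → ℝ) {b : κ} (hb : b ∈ T) (u : ℝ) :
    ∑ l ∈ T, v l * exp (update x b u l / τ) =
      v b * exp (u / τ) + ∑ l ∈ T.erase b, v l * exp (x l / τ) := by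
  rw [← add_sum_erase T _ hb, update_self]
  congr 1
  exact sum_congr rfl fun l hl => by rw [update_of_ne (ne_of_mem_erase hl)]

lemma hasDerivAt_log_sum_mul_exp_update {T : Finset κ} (τ : ℝ) (v x : κ → ℝ) {b : κ}
    (hb : b ∈ T) (hS : ∑ l ∈ T, v l * exp (x l / τ) ≠ 0) :
    HasDerivAt (fun u => log (∑ l ∈ T, v l * exp (update x b u l / τ)))
      (v b * exp (x b / τ) / (τ * ∑ l ∈ T, v l * exp (x l / τ))) (x b) := by
  simp only [sum_mul_exp_update τ v x hb]
  have hsplit := sum_mul_exp_update τ v x hb (x b)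
  rw [update_eq_self] at hsplit
  have hexp : HasDerivAt (fun u => v b * exp (u / τ) + ∑ l ∈ T.erase b, v l * exp (x l / τ))
      (v b * (exp (x b / τ) * (1 / τ))) (x b) :=
    (((hasDerivAt_id' (x b)).div_const τ).exp.const_mul (v b)).add_const _
  convert hexp.log (hsplit ▸ hS) using 1
  rw [← hsplit]
  field_simp

lemma hasDerivAt_anchorLoss_update {T P : Finset κ} (τ : ℝ) (v x : κ → ℝ) {b : κ}
    (hbT : b ∈ T) (hbP : b ∉ P) (hS : ∑ l ∈ T, v l * exp (x l / τ) ≠ 0) :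
    HasDerivAt (fun u => anchorLoss τ v T P (update x b u))
      (#P * (v b * exp (x b / τ) / (τ * ∑ l ∈ T, v l * exp (x l / τ)))) (x b) := by
  have hterm : ∀ j ∈ P, HasDerivAt
      (fun u => log (∑ l ∈ T, v l * exp (update x b u l / τ)) - update x b u j / τ)
      (v b * exp (x b / τ) / (τ * ∑ l ∈ T, v l * exp (x l / τ))) (x b) := by
    intro j hj
    have hjb : j ≠ b := ne_of_mem_of_not_mem hj hbP
    simpa only [update_of_ne hjb] using
      (hasDerivAt_log_sum_mul_exp_update τ v x hbT hS).sub_const (x j / τ)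
  unfold anchorLoss
  simpa only [sum_const, nsmul_eq_mul] using HasDerivAt.fun_sum hterm

lemma hasDerivAt_sum_rows_update {I : Finset ι} (F : ι → (κ → ℝ) → ℝ) (s : ι × κ → ℝ) {a : ι}
    (ha : a ∈ I) (b : κ) {f' : ℝ}
    (hF : HasDerivAt (fun u => F a (update (fun l => s (a, l)) b u)) f' (s (a, b))) :
    HasDerivAt (fun u => ∑ i ∈ I, F i (fun l => update s (a, b) u (i, l))) f' (s (a, b)) := by
  have hrows : (fun u => ∑ i ∈ I, F i (fun l => update s (a, b) u (i, l))) =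
      fun u => F a (update (fun l => s (a, l)) b u) + ∑ i ∈ I.erase a, F i (fun l => s (i, l)) := by
    funext u
    rw [← add_sum_erase I _ ha]
    congr 1
    · exact congrArg (F a) (update_comp_eq_of_injective s (Prod.mk_right_injective a) b u)
    · refine sum_congr rfl fun i hi => congrArg (F i) (funext fun l => ?_)
      exact update_of_ne (by simp [ne_of_mem_erase hi]) _ _
  rw [hrows]
  exact hF.add_const _

lemma hasDerivAt_sum_anchorLoss_update {I : Finset ι} (τ : ℝ) (c : ι → ℝ) (v : ι → κ → ℝ)
    (T P : ι → Finset κ) (s : ι × κ → ℝ) {a : ι} {b : κ} (ha : a ∈ I) (hbT : b ∈ T a)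
    (hbP : b ∉ P a) (hS : ∑ l ∈ T a, v a l * exp (s (a, l) / τ) ≠ 0) :
    HasDerivAt
      (fun u => ∑ i ∈ I, c i * anchorLoss τ (v i) (T i) (P i) (fun l => update s (a, b) u (i, l)))
      (c a * (#(P a) * (v a b * exp (s (a, b) / τ) / (τ * ∑ l ∈ T a, v a l * exp (s (a, l) / τ)))))
      (s (a, b)) :=
  hasDerivAt_sum_rows_update (fun i x => c i * anchorLoss τ (v i) (T i) (P i) x) s ha b
    ((hasDerivAt_anchorLoss_update τ (v a) (fun l => s (a, l)) hbT hbP hS).const_mul (c a))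

end AnchorLoss

lemma mul_exp_div_mul_exp (w₁ w₂ x y τ : ℝ) :
    w₁ * exp (x / τ) / (w₂ * exp (y / τ)) = w₁ / w₂ * exp ((x - y) / τ) := by
  rw [mul_div_mul_comm, ← exp_sub, sub_div]

theorem supremix_distance_magnifying_general
    {J : Type*} [Fintype J] [DecidableEq J]
    (I : Finset J)
    (ρ : J → ℝ) (mmin mmax : ℝ) (hm : mmin < mmax)
    (τ : ℝ) (hτ : 0 < τ)
    (w : ℝ → ℝ → ℝ → ℝ)
    (hw : ∀ t m mbar, w t m mbar = (1 + t * |m - mbar|) / (mmax - mmin))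
    (k : J → ℕ) (hk : ∀ a, k a = (I.filter (fun b => ρ b = ρ a)).card)
    (P : J → Finset J) (hP : ∀ a j, j ∈ P a ↔ j ≠ a ∧ ρ j = ρ a)
    (K : J → ℕ) (hK : ∀ a, K a = (P a).card + 1)
    (hK2 : ∀ a ∈ I, 2 ≤ K a)
    (L : ℝ → (J × J → ℝ) → ℝ)
    (hL : ∀ (t : ℝ) (s : J × J → ℝ), L t s = ∑ a ∈ I, (1 / (k a : ℝ)) *
      ∑ j ∈ P a,
        (Real.log (∑ l ∈ Finset.univ.erase a, w t (ρ a) (ρ l) * Real.exp (s (a, l) / τ))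
          - s (a, j) / τ))
    (s : J × J → ℝ) (a : J) (ha : a ∈ I)
    (l l' : J) (hla : l ≠ a) (hl'a : l' ≠ a)
    (hρl : ρ l ≠ ρ a) (hρl' : ρ l' ≠ ρ a)
    (hfar : |ρ a - ρ l'| < |ρ a - ρ l|)
    (D₁ D₂ : ℝ → ℝ)
    (hD₁ : ∀ t ∈ ({0, 1} : Set ℝ),
      HasDerivAt (fun u => L t (Function.update s (a, l) u)) (D₁ t) (s (a, l)))
    (hD₂ : ∀ t ∈ ({0, 1} : Set ℝ),
      HasDerivAt (fun u => L t (Function.update s (a, l') u)) (D₂ t) (s (a, l'))) :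
    (∀ t ∈ ({0, 1} : Set ℝ), 0 < D₁ t ∧ 0 < D₂ t ∧
      D₁ t / D₂ t = ((1 + t * |ρ a - ρ l|) / (1 + t * |ρ a - ρ l'|)) *
        Real.exp ((s (a, l) - s (a, l')) / τ))
    ∧ D₁ 0 / D₂ 0 < D₁ 1 / D₂ 1 := by
  have hden : 0 < mmax - mmin := sub_pos.2 hm
  have hwpos : ∀ t, 0 ≤ t → ∀ m m', 0 < w t m m' := fun t ht m m' => by
    rw [hw]; exact div_pos (by positivity) hden
  have hPa : (0 : ℝ) < #(P a) := by
    have := hK2 a ha; rw [hK] at this; exact_mod_cast (by omega : 0 < #(P a))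
  have hka : (0 : ℝ) < k a := by
    have : 0 < #(I.filter fun b => ρ b = ρ a) := card_pos.2 ⟨a, mem_filter.2 ⟨ha, rfl⟩⟩
    rw [hk]; exact_mod_cast this
  set S : ℝ → ℝ := fun t => ∑ j ∈ univ.erase a, w t (ρ a) (ρ j) * exp (s (a, j) / τ)
  have hS : ∀ t, 0 ≤ t → 0 < S t := fun t ht =>
    sum_pos (fun j _ => mul_pos (hwpos t ht _ _) (exp_pos _)) ⟨l, mem_erase.2 ⟨hla, mem_univ l⟩⟩
  have hgrad : ∀ t, 0 ≤ t → ∀ b, b ≠ a → ρ b ≠ ρ a → HasDerivAt (fun u => L t (update s (a, b) u))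
      (1 / k a * (#(P a) * (w t (ρ a) (ρ b) * exp (s (a, b) / τ) / (τ * S t)))) (s (a, b)) := by
    intro t ht b hba hρb
    simp only [hL]
    exact hasDerivAt_sum_anchorLoss_update τ (fun i => 1 / (k i : ℝ)) (fun i j => w t (ρ i) (ρ j))
      (fun i => univ.erase i) P s ha (mem_erase.2 ⟨hba, mem_univ b⟩)
      (fun h => hρb ((hP a b).1 h).2) (hS t ht).ne'
  have hratio : ∀ t ∈ ({0, 1} : Set ℝ), 0 < D₁ t ∧ 0 < D₂ t ∧
      D₁ t / D₂ t = ((1 + t * |ρ a - ρ l|) / (1 + t * |ρ a - ρ l'|)) *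
        exp ((s (a, l) - s (a, l')) / τ) := by
    intro t htmem
    have ht : 0 ≤ t := by rcases htmem with rfl | rfl <;> norm_num
    rw [(hD₁ t htmem).unique (hgrad t ht l hla hρl),
      (hD₂ t htmem).unique (hgrad t ht l' hl'a hρl')]
    have := hwpos t ht (ρ a) (ρ l)
    have := hwpos t ht (ρ a) (ρ l')
    have := hS t ht
    refine ⟨by positivity, by positivity, ?_⟩
    rw [mul_div_mul_left _ _ (by positivity), mul_div_mul_left _ _ hPa.ne',
      div_div_div_cancel_right₀ (by positivity), mul_exp_div_mul_exp, hw, hw,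
      div_div_div_cancel_right₀ hden.ne']
  refine ⟨hratio, ?_⟩
  rw [(hratio 0 (by simp)).2.2, (hratio 1 (by simp)).2.2]
  simp only [zero_mul, add_zero, div_one, one_mul]
  have hq : 1 < (1 + |ρ a - ρ l|) / (1 + |ρ a - ρ l'|) :=
    (one_lt_div (by positivity)).2 (by linarith)
  exact lt_mul_of_one_lt_left (exp_pos _) hq

/-- **Theorem 1 (Distance Magnifying).**
For an anchor `a ∈ I` and contrast elements `l, l' ≠ a` with `ρ l ≠ ρ a`, `ρ l' ≠ ρ a` and
`|ρ a − ρ l| > |ρ a − ρ l'|`, letting `D₁ t`, `D₂ t` be the partial derivatives of the loss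
`L t` (with weights `w_t(m,m̄) = (1 + t·|m − m̄|)/(m_max − m_min)`) with respect to the logits
`s (a,l)` and `s (a,l')`, for `t ∈ {0,1}` both derivatives are positive, the ratio satisfies
`D₁ t / D₂ t = ((1 + t·|ρ a − ρ l|)/(1 + t·|ρ a − ρ l'|)) · exp((s(a,l) − s(a,l'))/τ)`,
and consequently `D₁ 1 / D₂ 1 > D₁ 0 / D₂ 0`. -/
theorem supremix_distance_magnifying
    {J : Type*} [Fintype J] [DecidableEq J]
    (I : Finset J) (hI : I.Nonempty)
    (ρ : J → ℝ) (mmin mmax : ℝ) (hm : mmin < mmax)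
    (τ : ℝ) (hτ : 0 < τ)
    (w : ℝ → ℝ → ℝ → ℝ)
    (hw : ∀ t m mbar, w t m mbar = (1 + t * |m - mbar|) / (mmax - mmin))
    (k : J → ℕ) (hk : ∀ a, k a = (I.filter (fun b => ρ b = ρ a)).card)
    (P : J → Finset J) (hP : ∀ a j, j ∈ P a ↔ j ≠ a ∧ ρ j = ρ a)
    (K : J → ℕ) (hK : ∀ a, K a = (P a).card + 1)
    (hK2 : ∀ a ∈ I, 2 ≤ K a)
    (L : ℝ → (J × J → ℝ) → ℝ)
    (hL : ∀ (t : ℝ) (s : J × J → ℝ), L t s = ∑ a ∈ I, (1 / (k a : ℝ)) *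
      ∑ j ∈ P a,
        (Real.log (∑ l ∈ Finset.univ.erase a, w t (ρ a) (ρ l) * Real.exp (s (a, l) / τ))
          - s (a, j) / τ))
    (s : J × J → ℝ) (a : J) (ha : a ∈ I)
    (l l' : J) (hla : l ≠ a) (hl'a : l' ≠ a)
    (hρl : ρ l ≠ ρ a) (hρl' : ρ l' ≠ ρ a)
    (hfar : |ρ a - ρ l'| < |ρ a - ρ l|)
    (D₁ D₂ : ℝ → ℝ)
    (hD₁ : ∀ t ∈ ({0, 1} : Set ℝ),
      HasDerivAt (fun u => L t (Function.update s (a, l) u)) (D₁ t) (s (a, l)))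
    (hD₂ : ∀ t ∈ ({0, 1} : Set ℝ),
      HasDerivAt (fun u => L t (Function.update s (a, l') u)) (D₂ t) (s (a, l'))) :
    (∀ t ∈ ({0, 1} : Set ℝ), 0 < D₁ t ∧ 0 < D₂ t ∧
      D₁ t / D₂ t = ((1 + t * |ρ a - ρ l|) / (1 + t * |ρ a - ρ l'|)) *
        Real.exp ((s (a, l) - s (a, l')) / τ))
    ∧ D₁ 0 / D₂ 0 < D₁ 1 / D₂ 1 :=
  supremix_distance_magnifying_general I ρ mmin mmax hm τ hτ w hw k hk P hP K hK hK2 L hL s a ha l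
    l' hla hl'a hρl hρl' hfar D₁ D₂ hD₁ hD₂
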